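/- The algebra Λ_{D,τ} of an oriented knot diagram with n ≥ 1 crossings has k-dimension 4n², i.e., the square of the number n_D = 2n of arrows of Q_D. -/

import Mathlib

open Quiver

/-- The type of arrows of a quiver, bundled with their endpoints. -/
abbrev QuiverArrow (V : Type) [Quiver.{0} V] : Type := Σ a b : V, a ⟶ b

/-- The defining relations of the path algebra of a quiver `V` over `k`, presented
as a quotient of the free algebra on the vertices (idempotents) and the arrows. -/
inductive PathAlgRel (k : Type) [CommRing k] (V : Type) [Quiver.{0} V] [Fintype V] [DecidableEq V] :
    FreeAlgebra k (V ⊕ QuiverArrow V) → FreeAlgebra k (V ⊕ QuiverArrow V) → Prop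
  | vertex (a b : V) :
      PathAlgRel k V (FreeAlgebra.ι k (Sum.inl a) * FreeAlgebra.ι k (Sum.inl b))
        (if a = b then FreeAlgebra.ι k (Sum.inl a) else 0)
  | unit : PathAlgRel k V (∑ a : V, FreeAlgebra.ι k (Sum.inl a)) 1
  | src (f : QuiverArrow V) (v : V) :
      PathAlgRel k V (FreeAlgebra.ι k (Sum.inr f) * FreeAlgebra.ι k (Sum.inl v))
        (if v = f.1 then FreeAlgebra.ι k (Sum.inr f) else 0)
  | tgt (f : QuiverArrow V) (v : V) :
      PathAlgRel k V (FreeAlgebra.ι k (Sum.inl v) * FreeAlgebra.ι k (Sum.inr f))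
        (if v = f.2.1 then FreeAlgebra.ι k (Sum.inr f) else 0)

/-- The path algebra `kQ` of a finite quiver. -/
abbrev PathAlg (k : Type) [CommRing k] (V : Type) [Quiver.{0} V] [Fintype V] [DecidableEq V] :
    Type := RingQuot (PathAlgRel k V)

variable (k : Type) [CommRing k] (V : Type) [Quiver.{0} V] [Fintype V] [DecidableEq V]

/-- The idempotent of the path algebra corresponding to a vertex (trivial path). -/
def vertexElem (a : V) : PathAlg k V :=
  RingQuot.mkAlgHom k (PathAlgRel k V) (FreeAlgebra.ι k (Sum.inl a))

/-- The element of the path algebra corresponding to an arrow. -/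
def arrowElem (f : QuiverArrow V) : PathAlg k V :=
  RingQuot.mkAlgHom k (PathAlgRel k V) (FreeAlgebra.ι k (Sum.inr f))

/-- The element of the path algebra corresponding to a path: the product of its arrows
(in composition order), with trivial paths mapping to the vertex idempotents. -/
def pathElem : ∀ {a b : V}, Quiver.Path a b → PathAlg k V
  | a, _, Quiver.Path.nil => vertexElem k V a
  | _, _, Quiver.Path.cons p f => arrowElem k V ⟨_, _, f⟩ * pathElem p

/-- The two-sided ideal of the path algebra generated by the arrows. -/
def arrowIdeal : TwoSidedIdeal (PathAlg k V) :=
  TwoSidedIdeal.span (Set.range (arrowElem k V))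

open Quiver

/-- The Gauss data of an oriented knot diagram with `n` crossings: traversing the knot,
one passes through `2 * n` crossing-points, indexed by `ZMod (2 * n)`; `c i` is the
crossing visited at position `i`, and `over e`, `under e` are the positions at which the
crossing `e` is visited over- resp. under-crossing. -/
structure GaussData (n : ℕ) where
  c : ZMod (2 * n) → Fin n
  overPt : Fin n → ZMod (2 * n)
  under : Fin n → ZMod (2 * n)
  bij : Function.Bijective (Sum.elim overPt under : Fin n ⊕ Fin n → ZMod (2 * n))
  c_over : ∀ e, c (overPt e) = e
  c_under : ∀ e, c (under e) = e

variable {n : ℕ}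

/-- The vertices of the quiver `Q_D` of the diagram: the crossings `Fin n`
(wrapped in a structure so that the quiver structure can depend on `D`). -/
@[ext] structure DiagVertex (D : GaussData n) where
  val : Fin n
  deriving DecidableEq

instance (D : GaussData n) : Fintype (DiagVertex D) :=
  Fintype.ofEquiv (Fin n) ⟨DiagVertex.mk, DiagVertex.val, fun _ => rfl, fun _ => rfl⟩

/-- The quiver `Q_D` of the diagram: vertices are the crossings, arrows are the segments,
indexed by `ZMod (2 * n)`; the arrow `i` has source `c i` and target `c (i + 1)`. -/
instance diagQuiver (D : GaussData n) : Quiver.{0} (DiagVertex D) :=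
  ⟨fun a b => { i : ZMod (2 * n) // D.c i = a.val ∧ D.c (i + 1) = b.val }⟩

namespace GaussData

variable (D : GaussData n)

/-- The path following the segments `i, i + 1, …, i + ℓ - 1`. -/
def segPath (i : ZMod (2 * n)) : ∀ ℓ : ℕ, Quiver.Path (⟨D.c i⟩ : DiagVertex D) ⟨D.c (i + ℓ)⟩
  | 0 => Quiver.Path.nil.cast rfl (congrArg (fun z => (⟨D.c z⟩ : DiagVertex D)) (by push_cast; ring))
  | ℓ + 1 =>
      (Quiver.Path.cons (segPath i ℓ)
        (⟨i + ℓ, rfl, rfl⟩ : (⟨D.c (i + ℓ)⟩ : DiagVertex D) ⟶ ⟨D.c (i + ℓ + 1)⟩)).cast rfl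
        (congrArg (fun z => (⟨D.c z⟩ : DiagVertex D)) (by push_cast; ring))

/-- The length of the path `α_e` : the unique representative in `{1, …, 2n}` of
`under e - over e` in `ZMod (2 * n)`. -/
def len₁ (e : Fin n) : ℕ :=
  if (D.under e - D.overPt e).val = 0 then 2 * n else (D.under e - D.overPt e).val

/-- The length of the path `β_e` : the unique representative in `{1, …, 2n}` of
`over e - under e` in `ZMod (2 * n)`. -/
def len₂ (e : Fin n) : ℕ :=
  if (D.overPt e - D.under e).val = 0 then 2 * n else (D.overPt e - D.under e).val

lemma coe_len₁ [NeZero n] (e : Fin n) :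
    ((D.len₁ e : ℕ) : ZMod (2 * n)) = D.under e - D.overPt e := by
  haveI : NeZero (2 * n) := ⟨by have := NeZero.ne n; omega⟩
  rw [len₁]
  split_ifs with h
  · rw [ZMod.natCast_self]
    exact ((ZMod.val_eq_zero _).mp h).symm
  · exact ZMod.natCast_rightInverse _

lemma coe_len₂ [NeZero n] (e : Fin n) :
    ((D.len₂ e : ℕ) : ZMod (2 * n)) = D.overPt e - D.under e := by
  haveI : NeZero (2 * n) := ⟨by have := NeZero.ne n; omega⟩
  rw [len₂]
  split_ifs with h
  · rw [ZMod.natCast_self]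
    exact ((ZMod.val_eq_zero _).mp h).symm
  · exact ZMod.natCast_rightInverse _

/-- The path `α_e`, from the over-point of `e` to its under-point. -/
def alphaPath [NeZero n] (e : Fin n) : Quiver.Path (⟨e⟩ : DiagVertex D) ⟨e⟩ :=
  (D.segPath (D.overPt e) (D.len₁ e)).cast
    (congrArg DiagVertex.mk (D.c_over e))
    (congrArg (fun z => (⟨D.c z⟩ : DiagVertex D)) (by rw [D.coe_len₁]; ring) |>.trans
      (congrArg DiagVertex.mk (D.c_under e)))

/-- The path `β_e`, from the under-point of `e` to its over-point. -/
def betaPath [NeZero n] (e : Fin n) : Quiver.Path (⟨e⟩ : DiagVertex D) ⟨e⟩ :=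
  (D.segPath (D.under e) (D.len₂ e)).cast
    (congrArg DiagVertex.mk (D.c_under e))
    (congrArg (fun z => (⟨D.c z⟩ : DiagVertex D)) (by rw [D.coe_len₂]; ring) |>.trans
      (congrArg DiagVertex.mk (D.c_over e)))

/-- The positive (over-crossing) fundamental cycle `γ⁺_e = β_e α_e`
(first `α_e`, then `β_e`). -/
def gammaPlus [NeZero n] (e : Fin n) : Quiver.Path (⟨e⟩ : DiagVertex D) ⟨e⟩ :=
  (D.alphaPath e).comp (D.betaPath e)

/-- The negative (under-crossing) fundamental cycle `γ⁻_e = α_e β_e`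
(first `β_e`, then `α_e`). -/
def gammaMinus [NeZero n] (e : Fin n) : Quiver.Path (⟨e⟩ : DiagVertex D) ⟨e⟩ :=
  (D.betaPath e).comp (D.alphaPath e)

end GaussData

variable {n : ℕ}

/-- The element of the path algebra `kQ_D` given by the arrow (segment) `i`. -/
def arrowGen (k : Type) [CommRing k] (D : GaussData n) (i : ZMod (2 * n)) :
    PathAlg k (DiagVertex D) :=
  arrowElem k (DiagVertex D) ⟨⟨D.c i⟩, ⟨D.c (i + 1)⟩, ⟨i, rfl, rfl⟩⟩

/-- The two-sided ideal `I_τ` of `kQ_D`, generated by the Type I relations (composable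
length-2 paths `b ∘ a` with `b ≠ a + 1`) and the Type II relations
`α_e β_e - τ(e) β_e α_e`. -/
def knotIdeal (k : Type) [CommRing k] [NeZero n] (D : GaussData n) (τ : Fin n → kˣ) :
    TwoSidedIdeal (PathAlg k (DiagVertex D)) :=
  TwoSidedIdeal.span
    ({x | ∃ i j : ZMod (2 * n), D.c (i + 1) = D.c j ∧ j ≠ i + 1 ∧
        x = arrowGen k D j * arrowGen k D i} ∪
     {x | ∃ e : Fin n, x = pathElem k (DiagVertex D) (D.gammaMinus e) -
        (τ e : k) • pathElem k (DiagVertex D) (D.gammaPlus e)})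

/-- The defining relations of the algebra `Λ_{D,τ}` of the diagram, as a quotient of the
path algebra `kQ_D`. -/
inductive KnotRel (k : Type) [CommRing k] [NeZero n] (D : GaussData n) (τ : Fin n → kˣ) :
    PathAlg k (DiagVertex D) → PathAlg k (DiagVertex D) → Prop
  | typeI (i j : ZMod (2 * n)) (hcomp : D.c (i + 1) = D.c j) (hne : j ≠ i + 1) :
      KnotRel k D τ (arrowGen k D j * arrowGen k D i) 0
  | typeII (e : Fin n) :
      KnotRel k D τ (pathElem k (DiagVertex D) (D.gammaMinus e))
        ((τ e : k) • pathElem k (DiagVertex D) (D.gammaPlus e))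

/-- The algebra `Λ_{D,τ} = kQ_D / I_τ` of the diagram `D` with respect to `τ`. -/
abbrev KnotAlg (k : Type) [CommRing k] [NeZero n] (D : GaussData n) (τ : Fin n → kˣ) : Type :=
  RingQuot (KnotRel k D τ)

/-- The elements of `Λ_{D,τ}` claimed to form a basis: the trivial paths, the
segment-following paths of length `1 ≤ ℓ ≤ 2n - 1`, and the positive fundamental cycles. -/
def knotBasisFamily (k : Type) [CommRing k] [NeZero n] (D : GaussData n) (τ : Fin n → kˣ) :
    Fin n ⊕ (ZMod (2 * n) × Fin (2 * n - 1)) ⊕ Fin n → KnotAlg k D τ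
  | .inl e => RingQuot.mkAlgHom k (KnotRel k D τ) (vertexElem k (DiagVertex D) ⟨e⟩)
  | .inr (.inl (i, j)) =>
      RingQuot.mkAlgHom k (KnotRel k D τ) (pathElem k (DiagVertex D) (D.segPath i (j.val + 1)))
  | .inr (.inr e) =>
      RingQuot.mkAlgHom k (KnotRel k D τ) (pathElem k (DiagVertex D) (D.gammaPlus e))

/-- The defining relations of the monomial algebra `Ξ_D` of the diagram: the Type I
relations, together with all paths of length `2n + 1` (Type II'). -/
inductive MonRel (k : Type) [CommRing k] [NeZero n] (D : GaussData n) :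
    PathAlg k (DiagVertex D) → PathAlg k (DiagVertex D) → Prop
  | typeI (i j : ZMod (2 * n)) (hcomp : D.c (i + 1) = D.c j) (hne : j ≠ i + 1) :
      MonRel k D (arrowGen k D j * arrowGen k D i) 0
  | typeII' (a b : DiagVertex D) (p : Quiver.Path a b) (hp : p.length = 2 * n + 1) :
      MonRel k D (pathElem k (DiagVertex D) p) 0

/-- The monomial algebra `Ξ_D = kQ_D / J_D` of the diagram `D`. -/
abbrev MonAlg (k : Type) [CommRing k] [NeZero n] (D : GaussData n) : Type :=
  RingQuot (MonRel k D)

/-- The elements of `Ξ_D` claimed to form a basis: the trivial paths and the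
segment-following paths of length `1 ≤ ℓ ≤ 2n`. -/
def monBasisFamily (k : Type) [CommRing k] [NeZero n] (D : GaussData n) :
    Fin n ⊕ (ZMod (2 * n) × Fin (2 * n)) → MonAlg k D
  | .inl e => RingQuot.mkAlgHom k (MonRel k D) (vertexElem k (DiagVertex D) ⟨e⟩)
  | .inr (i, j) =>
      RingQuot.mkAlgHom k (MonRel k D) (pathElem k (DiagVertex D) (D.segPath i (j.val + 1)))

/-!
The family `knotBasisFamily` (the trivial paths `e_v`, the paths following the knot for
`1 ≤ ℓ < 2n` steps from any of the `2n` positions, and the cycles `γ⁺_e`) has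
`n + 2n (2n - 1) + n = 4n²` members and is a basis of `Λ_{D,τ}`.

It spans: by the Type I relations, left multiplication by an arrow either extends a path along
the knot or kills it; by the Type II relation, the path of length `2n` from any position is a
unit multiple of the cycle `γ⁺` at its crossing; consequently every path of length `2n + 1`
vanishes.

It is linearly independent: writing the left regular representation in this basis gives explicit
operators on `k^(4n²)` for the vertices and arrows, which satisfy the path-algebra relations and
the relations of `I_τ`; applying the resulting representation of `Λ_{D,τ}` to the coordinate
vector of `1` sends each member of the family to the corresponding standard basis vector.
-/

section PathAlgebra

lemma vertexElem_mul_vertexElem (a b : V) :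
    vertexElem k V a * vertexElem k V b = if a = b then vertexElem k V a else 0 := by
  rw [vertexElem, vertexElem, ← map_mul, RingQuot.mkAlgHom_rel k (PathAlgRel.vertex a b),
    apply_ite (RingQuot.mkAlgHom k _), map_zero]

lemma sum_vertexElem : ∑ a : V, vertexElem k V a = 1 := by
  simp only [vertexElem]
  rw [← map_sum, RingQuot.mkAlgHom_rel k PathAlgRel.unit, map_one]

lemma arrowElem_mul_vertexElem (f : QuiverArrow V) (v : V) :
    arrowElem k V f * vertexElem k V v = if v = f.1 then arrowElem k V f else 0 := by
  rw [arrowElem, vertexElem, ← map_mul, RingQuot.mkAlgHom_rel k (PathAlgRel.src f v),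
    apply_ite (RingQuot.mkAlgHom k _), map_zero]

lemma vertexElem_mul_arrowElem (f : QuiverArrow V) (v : V) :
    vertexElem k V v * arrowElem k V f = if v = f.2.1 then arrowElem k V f else 0 := by
  rw [arrowElem, vertexElem, ← map_mul, RingQuot.mkAlgHom_rel k (PathAlgRel.tgt f v),
    apply_ite (RingQuot.mkAlgHom k _), map_zero]

lemma pathElem_cast {a b a' b' : V} (ha : a = a') (hb : b = b') (p : Quiver.Path a b) :
    pathElem k V (p.cast ha hb) = pathElem k V p := by
  subst ha hb
  rfl

lemma vertexElem_mul_pathElem {a b : V} (v : V) (p : Quiver.Path a b) :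
    vertexElem k V v * pathElem k V p = if v = b then pathElem k V p else 0 := by
  cases p with
  | nil =>
      rw [pathElem, vertexElem_mul_vertexElem]
      split_ifs with h <;> simp [h]
  | cons p f =>
      rw [pathElem, ← mul_assoc, vertexElem_mul_arrowElem]
      split_ifs <;> simp

lemma pathElem_comp {a b c : V} (p : Quiver.Path a b) (q : Quiver.Path b c) :
    pathElem k V (p.comp q) = pathElem k V q * pathElem k V p := by
  induction q with
  | nil => rw [Quiver.Path.comp_nil, pathElem, vertexElem_mul_pathElem, if_pos rfl]
  | cons q f ih => rw [Quiver.Path.comp_cons, pathElem, pathElem, ih, mul_assoc]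

section Lift

variable {V} {A : Type*} [Semiring A] [Algebra k A] {P : V → A} {X : QuiverArrow V → A}
  (hPP : ∀ a b, P a * P b = if a = b then P a else 0) (hP : ∑ a, P a = 1)
  (hXP : ∀ f v, X f * P v = if v = f.1 then X f else 0)
  (hPX : ∀ f v, P v * X f = if v = f.2.1 then X f else 0)

def PathAlg.lift : PathAlg k V →ₐ[k] A :=
  RingQuot.liftAlgHom k ⟨FreeAlgebra.lift k (Sum.elim P X), fun x y h => by
    cases h <;>
      simp only [map_mul, map_sum, map_one, apply_ite (FreeAlgebra.lift k (Sum.elim P X)),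
        map_zero, FreeAlgebra.lift_ι_apply, Sum.elim_inl, Sum.elim_inr, hPP, hP, hXP, hPX]⟩

lemma PathAlg.lift_vertexElem (a : V) :
    PathAlg.lift k hPP hP hXP hPX (vertexElem k V a) = P a := by
  rw [PathAlg.lift, vertexElem, RingQuot.liftAlgHom_mkAlgHom_apply, FreeAlgebra.lift_ι_apply,
    Sum.elim_inl]

lemma PathAlg.lift_arrowElem (f : QuiverArrow V) :
    PathAlg.lift k hPP hP hXP hPX (arrowElem k V f) = X f := by
  rw [PathAlg.lift, arrowElem, RingQuot.liftAlgHom_mkAlgHom_apply, FreeAlgebra.lift_ι_apply,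
    Sum.elim_inr]

end Lift

end PathAlgebra

namespace GaussData

variable (D : GaussData n)

lemma overPt_ne_under (e : Fin n) : D.overPt e ≠ D.under e := fun h =>
  Sum.inl_ne_inr (D.bij.1 (a₁ := .inl e) (a₂ := .inr e) h)

lemma eq_overPt_or_eq_under (i : ZMod (2 * n)) : i = D.overPt (D.c i) ∨ i = D.under (D.c i) := by
  obtain ⟨e | e, rfl⟩ := D.bij.2 i
  · exact .inl (by simp only [Sum.elim_inl, D.c_over])
  · exact .inr (by simp only [Sum.elim_inr, D.c_under])

lemma exists_ne_c_eq (i : ZMod (2 * n)) : ∃ j, j ≠ i ∧ D.c j = D.c i := by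
  rcases D.eq_overPt_or_eq_under i with h | h
  · exact ⟨D.under (D.c i), fun h' => D.overPt_ne_under _ (h.symm.trans h'.symm), D.c_under _⟩
  · exact ⟨D.overPt (D.c i), fun h' => D.overPt_ne_under _ (h'.trans h), D.c_over _⟩

lemma len₁_add_len₂ [NeZero n] (e : Fin n) : D.len₁ e + D.len₂ e = 2 * n := by
  have hne : D.under e - D.overPt e ≠ 0 := sub_ne_zero.mpr (D.overPt_ne_under e).symm
  have hval : (D.under e - D.overPt e).val ≠ 0 := fun h => hne ((ZMod.val_eq_zero _).mp h)
  have hlt : (D.under e - D.overPt e).val < 2 * n := ZMod.val_lt _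
  rw [len₁, len₂, if_neg hval, ← neg_sub (D.under e), ZMod.neg_val, if_neg hne]
  split_ifs <;> omega

def segElem (i : ZMod (2 * n)) (ℓ : ℕ) : PathAlg k (DiagVertex D) :=
  pathElem k (DiagVertex D) (D.segPath i ℓ)

lemma segElem_zero (i : ZMod (2 * n)) :
    D.segElem k i 0 = vertexElem k (DiagVertex D) ⟨D.c i⟩ := by
  rw [segElem, segPath, pathElem_cast, pathElem]

lemma segElem_succ (i : ZMod (2 * n)) (ℓ : ℕ) :
    D.segElem k i (ℓ + 1) = arrowGen k D (i + ℓ) * D.segElem k i ℓ := by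
  rw [segElem, segPath, pathElem_cast, pathElem]
  rfl

lemma segElem_one (i : ZMod (2 * n)) : D.segElem k i 1 = arrowGen k D i := by
  rw [segElem_succ, segElem_zero, Nat.cast_zero, add_zero, arrowGen, arrowElem_mul_vertexElem,
    if_pos rfl]

lemma segElem_add (i : ZMod (2 * n)) (a b : ℕ) :
    D.segElem k i (a + b) = D.segElem k (i + a) b * D.segElem k i a := by
  induction b with
  | zero => rw [add_zero, segElem_zero, segElem, vertexElem_mul_pathElem, if_pos rfl]
  | succ b ih => rw [← add_assoc, segElem_succ, ih, segElem_succ, Nat.cast_add, add_assoc,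
      mul_assoc]

lemma pathElem_gammaPlus [NeZero n] (e : Fin n) :
    pathElem k (DiagVertex D) (D.gammaPlus e) = D.segElem k (D.overPt e) (2 * n) := by
  have h := D.segElem_add k (D.overPt e) (D.len₁ e) (D.len₂ e)
  rw [D.len₁_add_len₂, D.coe_len₁, add_sub_cancel] at h
  rw [h, gammaPlus, pathElem_comp, alphaPath, betaPath, pathElem_cast, pathElem_cast]
  rfl

lemma pathElem_gammaMinus [NeZero n] (e : Fin n) :
    pathElem k (DiagVertex D) (D.gammaMinus e) = D.segElem k (D.under e) (2 * n) := by
  have h := D.segElem_add k (D.under e) (D.len₂ e) (D.len₁ e)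
  rw [add_comm, D.len₁_add_len₂, D.coe_len₂, add_sub_cancel] at h
  rw [h, gammaMinus, pathElem_comp, alphaPath, betaPath, pathElem_cast, pathElem_cast]
  rfl

end GaussData

lemma arrowGen_mul_arrowGen_of_c_ne (D : GaussData n) {i j : ZMod (2 * n)}
    (h : D.c (i + 1) ≠ D.c j) : arrowGen k D j * arrowGen k D i = 0 := by
  have hj : arrowGen k D j * vertexElem k _ ⟨D.c j⟩ = arrowGen k D j := by
    rw [arrowGen, arrowElem_mul_vertexElem, if_pos rfl]
  have hi : vertexElem k _ ⟨D.c (i + 1)⟩ * arrowGen k D i = arrowGen k D i := by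
    rw [arrowGen, vertexElem_mul_arrowElem, if_pos rfl]
  rw [← hj, ← hi, mul_assoc, ← mul_assoc (vertexElem k _ _), vertexElem_mul_vertexElem,
    if_neg fun h' => h (congrArg DiagVertex.val h').symm, zero_mul, mul_zero]

/-- The unit by which the cycle of length `2n` starting at position `i` differs from the
positive fundamental cycle `γ⁺` at the crossing `c i`. -/
def cycleScalar (D : GaussData n) (τ : Fin n → kˣ) (i : ZMod (2 * n)) : kˣ :=
  if i = D.overPt (D.c i) then 1 else τ (D.c i)

lemma cycleScalar_overPt (D : GaussData n) (τ : Fin n → kˣ) (e : Fin n) :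
    cycleScalar k D τ (D.overPt e) = 1 := by
  rw [cycleScalar, D.c_over, if_pos rfl]

lemma cycleScalar_under (D : GaussData n) (τ : Fin n → kˣ) (e : Fin n) :
    cycleScalar k D τ (D.under e) = τ e := by
  rw [cycleScalar, D.c_under, if_neg (D.overPt_ne_under e).symm]

section KnotAlgebra

variable [NeZero n] (D : GaussData n) (τ : Fin n → kˣ)

local notation "π" => RingQuot.mkAlgHom k (KnotRel k D τ)

lemma mk_arrowGen_mul_arrowGen {i j : ZMod (2 * n)} (h : j ≠ i + 1) :
    π (arrowGen k D j) * π (arrowGen k D i) = 0 := by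
  rw [← map_mul]
  by_cases hc : D.c (i + 1) = D.c j
  · rw [RingQuot.mkAlgHom_rel k (KnotRel.typeI i j hc h), map_zero]
  · rw [arrowGen_mul_arrowGen_of_c_ne k D hc, map_zero]

lemma mk_arrowGen_mul_segElem (i j : ZMod (2 * n)) {ℓ : ℕ} (hℓ : 1 ≤ ℓ) :
    π (arrowGen k D j) * π (D.segElem k i ℓ) =
      if j = i + ℓ then π (D.segElem k i (ℓ + 1)) else 0 := by
  split_ifs with h
  · rw [← map_mul, D.segElem_succ k, h]
  · obtain ⟨m, rfl⟩ := Nat.exists_eq_add_of_le' hℓ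
    rw [D.segElem_succ k, map_mul, ← mul_assoc, mk_arrowGen_mul_arrowGen k D τ, zero_mul]
    rwa [add_assoc, ← Nat.cast_add_one]

lemma mk_segElem_two_mul (i : ZMod (2 * n)) :
    π (D.segElem k i (2 * n)) =
      (cycleScalar k D τ i : k) • π (pathElem k _ (D.gammaPlus (D.c i))) := by
  rcases D.eq_overPt_or_eq_under i with h | h <;> rw [h]
  · rw [cycleScalar_overPt, Units.val_one, one_smul, D.c_over, D.pathElem_gammaPlus k]
  · rw [cycleScalar_under, D.c_under, ← D.pathElem_gammaMinus k,
      RingQuot.mkAlgHom_rel k (KnotRel.typeII (D.c i)), map_smul]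

lemma mk_segElem_two_mul_add_one (i : ZMod (2 * n)) : π (D.segElem k i (2 * n + 1)) = 0 := by
  -- The path contains the full cycle from `i + 1`, a unit multiple of the full cycle from the
  -- other position `j` at the same crossing, whose first arrow does not compose with the arrow `i`.
  obtain ⟨j, hj, hc⟩ := D.exists_ne_c_eq (i + 1)
  have hcycle : π (D.segElem k (i + 1) (2 * n)) =
      ((cycleScalar k D τ (i + 1) * (cycleScalar k D τ j)⁻¹ : kˣ) : k) •
        π (D.segElem k j (2 * n)) := by
    rw [mk_segElem_two_mul, mk_segElem_two_mul, hc, smul_smul, Units.val_mul, mul_assoc,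
      Units.inv_mul, mul_one]
  have hpeel : D.segElem k j (2 * n) = D.segElem k (j + 1) (2 * n - 1) * arrowGen k D j := by
    rw [← D.segElem_one k, ← Nat.cast_one, ← D.segElem_add k,
      Nat.add_sub_cancel' (by have := NeZero.ne n; omega)]
  rw [add_comm (2 * n) 1, D.segElem_add k, D.segElem_one k, Nat.cast_one, map_mul, hcycle, hpeel,
    map_mul, smul_mul_assoc, mul_assoc, mk_arrowGen_mul_arrowGen k D τ hj, mul_zero, smul_zero]

lemma mk_segElem_of_two_mul_lt (i : ZMod (2 * n)) {ℓ : ℕ} (hℓ : 2 * n < ℓ) :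
    π (D.segElem k i ℓ) = 0 := by
  obtain ⟨m, rfl⟩ := Nat.exists_eq_add_of_le hℓ
  rw [D.segElem_add k, map_mul, mk_segElem_two_mul_add_one, mul_zero]

end KnotAlgebra

theorem Submodule.span_range_eq_top_of_ι_mul_mem {R A X ι : Type*} [CommSemiring R] [Semiring A]
    [Algebra R A] {f : FreeAlgebra R X →ₐ[R] A} (hf : Function.Surjective f) {b : ι → A}
    (h1 : 1 ∈ span R (Set.range b))
    (hb : ∀ x i, f (FreeAlgebra.ι R x) * b i ∈ span R (Set.range b)) :
    span R (Set.range b) = ⊤ := by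
  set S := span R (Set.range b)
  have hι : ∀ x, ∀ s ∈ S, f (FreeAlgebra.ι R x) * s ∈ S := fun x s hs =>
    (span_le (p := S.comap (LinearMap.mulLeft R (f (FreeAlgebra.ι R x))))).mpr
      (Set.range_subset_iff.mpr (hb x)) hs
  have hmul : ∀ y, ∀ s ∈ S, f y * s ∈ S := by
    intro y
    induction y using FreeAlgebra.induction with
    | grade0 r =>
        intro s hs
        rw [AlgHom.commutes, ← Algebra.smul_def]
        exact S.smul_mem r hs
    | grade1 x => exact hι x
    | mul y z hy hz =>
        intro s hs
        rw [map_mul, mul_assoc]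
        exact hy _ (hz s hs)
    | add y z hy hz =>
        intro s hs
        rw [map_add, add_mul]
        exact S.add_mem (hy s hs) (hz s hs)
  refine eq_top_iff.mpr fun a _ => ?_
  obtain ⟨y, rfl⟩ := hf a
  simpa using hmul y 1 h1

lemma arrowElem_eq_arrowGen (D : GaussData n) (f : QuiverArrow (DiagVertex D)) :
    arrowElem k _ f = arrowGen k D f.2.2.val := by
  obtain ⟨⟨a⟩, ⟨b⟩, i, ha, hb⟩ := f
  dsimp only at ha hb
  subst ha hb
  rfl

abbrev KnotBasisIndex (n : ℕ) : Type := Fin n ⊕ (ZMod (2 * n) × Fin (2 * n - 1)) ⊕ Fin n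

/-- Start position and length of the path representing a non-trivial basis element. -/
def GaussData.basisSegment (D : GaussData n) :
    (ZMod (2 * n) × Fin (2 * n - 1)) ⊕ Fin n → ZMod (2 * n) × ℕ
  | .inl (i, j) => (i, j + 1)
  | .inr e => (D.overPt e, 2 * n)

lemma GaussData.one_le_basisSegment_snd [NeZero n] (D : GaussData n)
    (t : (ZMod (2 * n) × Fin (2 * n - 1)) ⊕ Fin n) : 1 ≤ (D.basisSegment t).2 := by
  have := NeZero.ne n
  rcases t with ⟨i, j⟩ | e <;> simp only [basisSegment] <;> omega

section Spanning

variable [NeZero n] (D : GaussData n) (τ : Fin n → kˣ)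

local notation "π" => RingQuot.mkAlgHom k (KnotRel k D τ)

lemma knotBasisFamily_inr (t : (ZMod (2 * n) × Fin (2 * n - 1)) ⊕ Fin n) :
    knotBasisFamily k D τ (.inr t) =
      π (D.segElem k (D.basisSegment t).1 (D.basisSegment t).2) := by
  rcases t with ⟨i, j⟩ | e
  · rfl
  · exact congrArg π (D.pathElem_gammaPlus k e)

lemma mk_segElem_mem_span (i : ZMod (2 * n)) {ℓ : ℕ} (hℓ : 1 ≤ ℓ) :
    π (D.segElem k i ℓ) ∈ Submodule.span k (Set.range (knotBasisFamily k D τ)) := by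
  rcases lt_trichotomy ℓ (2 * n) with h | rfl | h
  · refine Submodule.subset_span ⟨.inr (.inl (i, ⟨ℓ - 1, by omega⟩)), ?_⟩
    rw [knotBasisFamily_inr]
    simp only [GaussData.basisSegment, Nat.sub_add_cancel hℓ]
  · rw [mk_segElem_two_mul]
    exact Submodule.smul_mem _ _ (Submodule.subset_span ⟨.inr (.inr _), rfl⟩)
  · rw [mk_segElem_of_two_mul_lt k D τ i h]
    exact zero_mem _

lemma mk_vertexElem_mul_mem_span (v : DiagVertex D) (s : KnotBasisIndex n) :
    π (vertexElem k _ v) * knotBasisFamily k D τ s ∈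
      Submodule.span k (Set.range (knotBasisFamily k D τ)) := by
  obtain ⟨a, b, p, hp⟩ : ∃ (a b : DiagVertex D) (p : Quiver.Path a b),
      knotBasisFamily k D τ s = π (pathElem k _ p) := by
    rcases s with e | t | e
    exacts [⟨⟨e⟩, ⟨e⟩, .nil, by rw [pathElem]; rfl⟩, ⟨_, _, _, rfl⟩, ⟨_, _, _, rfl⟩]
  rw [hp, ← map_mul, vertexElem_mul_pathElem, apply_ite π, map_zero, ← hp]
  split_ifs
  · exact Submodule.subset_span ⟨s, rfl⟩
  · exact zero_mem _

lemma mk_arrowGen_mul_mem_span (i : ZMod (2 * n)) (s : KnotBasisIndex n) :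
    π (arrowGen k D i) * knotBasisFamily k D τ s ∈
      Submodule.span k (Set.range (knotBasisFamily k D τ)) := by
  rcases s with e | t
  · rw [knotBasisFamily, ← map_mul, arrowGen, arrowElem_mul_vertexElem, apply_ite π, map_zero,
      ← arrowGen, ← D.segElem_one k]
    split_ifs
    · exact mk_segElem_mem_span k D τ i le_rfl
    · exact zero_mem _
  · rw [knotBasisFamily_inr, mk_arrowGen_mul_segElem k D τ _ _ (D.one_le_basisSegment_snd t)]
    split_ifs
    · exact mk_segElem_mem_span k D τ _ (by omega)
    · exact zero_mem _

theorem span_knotBasisFamily : Submodule.span k (Set.range (knotBasisFamily k D τ)) = ⊤ := by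
  refine Submodule.span_range_eq_top_of_ι_mul_mem
    (f := (π).comp (RingQuot.mkAlgHom k (PathAlgRel k (DiagVertex D))))
    ((RingQuot.mkAlgHom_surjective k _).comp (RingQuot.mkAlgHom_surjective k _)) ?_ ?_
  · rw [← map_one π, ← sum_vertexElem, map_sum]
    exact Submodule.sum_mem _ fun v _ => Submodule.subset_span ⟨.inl v.val, rfl⟩
  · rintro (v | f) s
    · exact mk_vertexElem_mul_mem_span k D τ v s
    · show π (arrowElem k _ f) * _ ∈ _
      rw [arrowElem_eq_arrowGen]
      exact mk_arrowGen_mul_mem_span k D τ _ s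

end Spanning

section BasisCoordinates

variable (D : GaussData n) (τ : Fin n → kˣ)

def basisTarget : KnotBasisIndex n → DiagVertex D
  | .inl e => ⟨e⟩
  | .inr t => ⟨D.c ((D.basisSegment t).1 + (D.basisSegment t).2)⟩

def vertexOp (v : DiagVertex D) : Module.End k (KnotBasisIndex n → k) :=
  LinearMap.pi fun s => if basisTarget D s = v then LinearMap.proj s else 0

lemma vertexOp_apply (v : DiagVertex D) (x : KnotBasisIndex n → k) (s : KnotBasisIndex n) :
    vertexOp k D v x s = if basisTarget D s = v then x s else 0 := by
  rw [vertexOp, LinearMap.pi_apply]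
  split_ifs <;> rfl

lemma vertexOp_mul_vertexOp (a b : DiagVertex D) :
    vertexOp k D a * vertexOp k D b = if a = b then vertexOp k D a else 0 := by
  refine LinearMap.ext fun x => funext fun s => ?_
  rw [Module.End.mul_apply, vertexOp_apply, vertexOp_apply]
  split_ifs <;> simp_all [vertexOp_apply]

lemma sum_vertexOp : ∑ v, vertexOp k D v = 1 := by
  refine LinearMap.ext fun x => funext fun s => ?_
  simp [vertexOp_apply]

lemma vertexOp_single (v : DiagVertex D) (s : KnotBasisIndex n) (a : k) :
    vertexOp k D v (Pi.single s a) = if basisTarget D s = v then Pi.single s a else 0 := by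
  funext t
  rw [vertexOp_apply]
  by_cases ht : t = s
  · subst ht
    split_ifs <;> simp
  · split_ifs <;> simp [ht]

/-- The coordinates of the image of `segElem i ℓ` in the basis `knotBasisFamily`, for `1 ≤ ℓ`. -/
def segCoord (i : ZMod (2 * n)) (ℓ : ℕ) : KnotBasisIndex n → k :=
  if h : ℓ < 2 * n then Pi.single (.inr (.inl (i, ⟨ℓ - 1, by omega⟩))) 1
  else if ℓ = 2 * n then (cycleScalar k D τ i : k) • Pi.single (.inr (.inr (D.c i))) 1
  else 0

lemma segCoord_two_mul (i : ZMod (2 * n)) :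
    segCoord k D τ i (2 * n) =
      (cycleScalar k D τ i : k) • Pi.single (.inr (.inr (D.c i))) 1 := by
  rw [segCoord, dif_neg (lt_irrefl _), if_pos rfl]

lemma segCoord_of_two_mul_lt (i : ZMod (2 * n)) {ℓ : ℕ} (h : 2 * n < ℓ) :
    segCoord k D τ i ℓ = 0 := by
  rw [segCoord, dif_neg (by omega), if_neg (by omega)]

lemma segCoord_basisSegment (t : (ZMod (2 * n) × Fin (2 * n - 1)) ⊕ Fin n) :
    segCoord k D τ (D.basisSegment t).1 (D.basisSegment t).2 = Pi.single (.inr t) 1 := by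
  rcases t with ⟨i, j⟩ | e
  · rw [segCoord, dif_pos (by simp only [GaussData.basisSegment]; omega)]
    rfl
  · rw [GaussData.basisSegment, segCoord_two_mul, cycleScalar_overPt, D.c_over, Units.val_one,
      one_smul]

lemma vertexOp_segCoord (v : DiagVertex D) (i : ZMod (2 * n)) {ℓ : ℕ} (hℓ : 1 ≤ ℓ) :
    vertexOp k D v (segCoord k D τ i ℓ) =
      if v = ⟨D.c (i + ℓ)⟩ then segCoord k D τ i ℓ else 0 := by
  rcases lt_trichotomy ℓ (2 * n) with h | rfl | h
  · rw [segCoord, dif_pos h, vertexOp_single]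
    simp only [basisTarget, GaussData.basisSegment, Nat.sub_add_cancel hℓ, eq_comm]
  · rw [segCoord_two_mul, map_smul, vertexOp_single]
    simp only [basisTarget, GaussData.basisSegment, ZMod.natCast_self, add_zero, D.c_over, eq_comm]
    split_ifs <;> simp
  · rw [segCoord_of_two_mul_lt k D τ i h, map_zero, ite_self]

def arrowAct (i : ZMod (2 * n)) : KnotBasisIndex n → KnotBasisIndex n → k
  | .inl e => if D.c i = e then segCoord k D τ i 1 else 0
  | .inr t =>
      if i = (D.basisSegment t).1 + (D.basisSegment t).2 then
        segCoord k D τ (D.basisSegment t).1 ((D.basisSegment t).2 + 1)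
      else 0

lemma arrowAct_eq_zero_of_ne (i : ZMod (2 * n)) {s : KnotBasisIndex n}
    (h : basisTarget D s ≠ ⟨D.c i⟩) : arrowAct k D τ i s = 0 := by
  rcases s with e | t
  · exact if_neg fun he => h (by rw [basisTarget, he])
  · exact if_neg fun hi => h (by rw [basisTarget, hi])

lemma exists_arrowAct_eq_smul_segCoord (i : ZMod (2 * n)) (s : KnotBasisIndex n) :
    ∃ (a : k) (i' : ZMod (2 * n)) (ℓ : ℕ), 1 ≤ ℓ ∧ i' + ℓ = i + 1 ∧
      arrowAct k D τ i s = a • segCoord k D τ i' ℓ := by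
  have h1 : i + ((1 : ℕ) : ZMod (2 * n)) = i + 1 := by rw [Nat.cast_one]
  rcases s with e | t
  · refine ⟨if D.c i = e then 1 else 0, i, 1, le_rfl, h1, ?_⟩
    simp only [arrowAct]
    split_ifs <;> simp
  · simp only [arrowAct]
    split_ifs with h
    · exact ⟨1, _, _, Nat.le_add_left 1 _, by rw [h]; push_cast; ring, (one_smul _ _).symm⟩
    · exact ⟨0, i, 1, le_rfl, h1, (zero_smul _ _).symm⟩

end BasisCoordinates

section Representation

variable [NeZero n] (D : GaussData n) (τ : Fin n → kˣ)

local notation "π" => RingQuot.mkAlgHom k (KnotRel k D τ)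

noncomputable def arrowOp (i : ZMod (2 * n)) : Module.End k (KnotBasisIndex n → k) :=
  (Pi.basisFun k _).constr k (arrowAct k D τ i)

lemma arrowOp_single (i : ZMod (2 * n)) (s : KnotBasisIndex n) :
    arrowOp k D τ i (Pi.single s 1) = arrowAct k D τ i s := by
  rw [arrowOp, ← Pi.basisFun_apply, Module.Basis.constr_basis]

lemma arrowOp_segCoord (i j : ZMod (2 * n)) {ℓ : ℕ} (hℓ : 1 ≤ ℓ) :
    arrowOp k D τ j (segCoord k D τ i ℓ) =
      if j = i + ℓ then segCoord k D τ i (ℓ + 1) else 0 := by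
  rcases lt_trichotomy ℓ (2 * n) with h | rfl | h
  · rw [segCoord, dif_pos h, arrowOp_single]
    simp only [arrowAct, GaussData.basisSegment, Nat.sub_add_cancel hℓ]
  · rw [segCoord_two_mul, map_smul, arrowOp_single,
      segCoord_of_two_mul_lt k D τ i (Nat.lt_succ_self _), ite_self]
    simp only [arrowAct, GaussData.basisSegment,
      segCoord_of_two_mul_lt k D τ _ (Nat.lt_succ_self _), ite_self, smul_zero]
  · rw [segCoord_of_two_mul_lt k D τ i h, map_zero,
      segCoord_of_two_mul_lt k D τ i (by omega : 2 * n < ℓ + 1), ite_self]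

lemma arrowOp_mul_vertexOp (f : QuiverArrow (DiagVertex D)) (v : DiagVertex D) :
    arrowOp k D τ f.2.2.val * vertexOp k D v =
      if v = f.1 then arrowOp k D τ f.2.2.val else 0 := by
  obtain ⟨⟨a⟩, b, i, ha, -⟩ := f
  dsimp only at ha ⊢
  subst ha
  refine (Pi.basisFun k _).ext fun s => ?_
  rw [Pi.basisFun_apply, Module.End.mul_apply, vertexOp_single]
  by_cases hs : basisTarget D s = v <;> by_cases hv : v = ⟨D.c i⟩
  · rw [if_pos hs, if_pos hv]
  · rw [if_pos hs, if_neg hv, LinearMap.zero_apply, arrowOp_single,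
      arrowAct_eq_zero_of_ne k D τ i (hs ▸ hv)]
  · rw [if_neg hs, if_pos hv, map_zero, arrowOp_single,
      arrowAct_eq_zero_of_ne k D τ i (hv ▸ hs)]
  · rw [if_neg hs, if_neg hv, map_zero, LinearMap.zero_apply]

lemma vertexOp_mul_arrowOp (f : QuiverArrow (DiagVertex D)) (v : DiagVertex D) :
    vertexOp k D v * arrowOp k D τ f.2.2.val =
      if v = f.2.1 then arrowOp k D τ f.2.2.val else 0 := by
  obtain ⟨a, ⟨b⟩, i, -, hb⟩ := f
  dsimp only at hb ⊢
  subst hb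
  refine (Pi.basisFun k _).ext fun s => ?_
  obtain ⟨a, i', ℓ, hℓ, hsum, hs⟩ := exists_arrowAct_eq_smul_segCoord k D τ i s
  rw [Pi.basisFun_apply, Module.End.mul_apply, arrowOp_single, hs, map_smul,
    vertexOp_segCoord k D τ v i' hℓ, hsum]
  split_ifs <;> simp [arrowOp_single, hs]

noncomputable def pathRep :
    PathAlg k (DiagVertex D) →ₐ[k] Module.End k (KnotBasisIndex n → k) :=
  PathAlg.lift k (vertexOp_mul_vertexOp k D) (sum_vertexOp k D) (arrowOp_mul_vertexOp k D τ)
    (vertexOp_mul_arrowOp k D τ)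

lemma pathRep_vertexElem (v : DiagVertex D) :
    pathRep k D τ (vertexElem k _ v) = vertexOp k D v :=
  PathAlg.lift_vertexElem k _ _ _ _ v

lemma pathRep_arrowGen (i : ZMod (2 * n)) : pathRep k D τ (arrowGen k D i) = arrowOp k D τ i :=
  PathAlg.lift_arrowElem k _ _ _ _ _

lemma pathRep_segElem_single_inl (i : ZMod (2 * n)) {ℓ : ℕ} (hℓ : 1 ≤ ℓ) (e : Fin n) :
    pathRep k D τ (D.segElem k i ℓ) (Pi.single (.inl e) 1) =
      if D.c i = e then segCoord k D τ i ℓ else 0 := by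
  induction ℓ, hℓ using Nat.le_induction with
  | base =>
      rw [D.segElem_one k, pathRep_arrowGen, arrowOp_single]
      rfl
  | succ ℓ hℓ ih =>
      rw [D.segElem_succ k, map_mul, Module.End.mul_apply, ih, pathRep_arrowGen,
        apply_ite (arrowOp k D τ (i + ℓ)), map_zero, arrowOp_segCoord k D τ _ _ hℓ, if_pos rfl]

lemma pathRep_segElem_segCoord (i i' : ZMod (2 * n)) {ℓ ℓ' : ℕ} (hℓ : 1 ≤ ℓ)
    (hℓ' : 1 ≤ ℓ') :
    pathRep k D τ (D.segElem k i ℓ) (segCoord k D τ i' ℓ') =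
      if i = i' + ℓ' then segCoord k D τ i' (ℓ' + ℓ) else 0 := by
  induction ℓ, hℓ using Nat.le_induction with
  | base => rw [D.segElem_one k, pathRep_arrowGen, arrowOp_segCoord k D τ _ _ hℓ']
  | succ ℓ hℓ ih =>
      rw [D.segElem_succ k, map_mul, Module.End.mul_apply, ih, pathRep_arrowGen,
        apply_ite (arrowOp k D τ (i + ℓ)), map_zero, arrowOp_segCoord k D τ _ _ (by omega)]
      split_ifs with h₁ h₂
      · rfl
      · exact absurd (by rw [h₁]; push_cast; ring) h₂
      · rfl

lemma pathRep_knotRel ⦃x y : PathAlg k (DiagVertex D)⦄ (h : KnotRel k D τ x y) :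
    pathRep k D τ x = pathRep k D τ y := by
  cases h with
  | typeI i j _ hne =>
      rw [map_mul, pathRep_arrowGen, pathRep_arrowGen, map_zero]
      refine (Pi.basisFun k _).ext fun s => ?_
      obtain ⟨a, i', ℓ, hℓ, hsum, hs⟩ := exists_arrowAct_eq_smul_segCoord k D τ i s
      rw [Pi.basisFun_apply, Module.End.mul_apply, arrowOp_single, hs, map_smul,
        arrowOp_segCoord k D τ _ _ hℓ, hsum, if_neg hne, smul_zero, LinearMap.zero_apply]
  | typeII e =>
      have h2n : 1 ≤ 2 * n := by have := NeZero.ne n; omega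
      rw [map_smul, D.pathElem_gammaMinus k, D.pathElem_gammaPlus k]
      refine (Pi.basisFun k _).ext fun s => ?_
      rw [Pi.basisFun_apply, LinearMap.smul_apply]
      rcases s with e' | t
      · rw [pathRep_segElem_single_inl k D τ _ h2n, pathRep_segElem_single_inl k D τ _ h2n,
          D.c_under, D.c_over, segCoord_two_mul, segCoord_two_mul, cycleScalar_under,
          cycleScalar_overPt, D.c_under, D.c_over]
        split_ifs <;> simp
      · have ht := D.one_le_basisSegment_snd t
        rw [← segCoord_basisSegment, pathRep_segElem_segCoord k D τ _ _ h2n ht,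
          pathRep_segElem_segCoord k D τ _ _ h2n ht,
          segCoord_of_two_mul_lt k D τ _ (by omega : 2 * n < _ + 2 * n)]
        simp

noncomputable def knotRep : KnotAlg k D τ →ₐ[k] Module.End k (KnotBasisIndex n → k) :=
  RingQuot.liftAlgHom k ⟨pathRep k D τ, pathRep_knotRel k D τ⟩

lemma knotRep_mk (x : PathAlg k (DiagVertex D)) : knotRep k D τ (π x) = pathRep k D τ x :=
  RingQuot.liftAlgHom_mkAlgHom_apply k _ _ x

/-- `∑ e, Pi.single (.inl e) 1` is the coordinate vector of `1 = ∑ e_v`. -/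
noncomputable def knotCoord : KnotAlg k D τ →ₗ[k] (KnotBasisIndex n → k) :=
  LinearMap.applyₗ (∑ e : Fin n, Pi.single (.inl e) 1) ∘ₗ (knotRep k D τ).toLinearMap

lemma knotCoord_apply (x : KnotAlg k D τ) :
    knotCoord k D τ x = knotRep k D τ x (∑ e : Fin n, Pi.single (.inl e) 1) :=
  rfl

lemma knotCoord_knotBasisFamily (s : KnotBasisIndex n) :
    knotCoord k D τ (knotBasisFamily k D τ s) = Pi.single s 1 := by
  rw [knotCoord_apply, map_sum]
  rcases s with e | t
  · rw [knotBasisFamily, knotRep_mk, pathRep_vertexElem]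
    simp only [vertexOp_single, basisTarget, DiagVertex.mk.injEq]
    rw [Finset.sum_ite_eq', if_pos (Finset.mem_univ _)]
  · rw [knotBasisFamily_inr, knotRep_mk]
    simp only [pathRep_segElem_single_inl k D τ _ (D.one_le_basisSegment_snd t)]
    rw [Finset.sum_ite_eq, if_pos (Finset.mem_univ _), segCoord_basisSegment]

theorem linearIndependent_knotBasisFamily : LinearIndependent k (knotBasisFamily k D τ) := by
  refine LinearIndependent.of_comp (knotCoord k D τ) ?_
  have h : knotCoord k D τ ∘ knotBasisFamily k D τ = Pi.basisFun k (KnotBasisIndex n) :=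
    funext fun s => (knotCoord_knotBasisFamily k D τ s).trans (Pi.basisFun_apply k _ s).symm
  exact h ▸ (Pi.basisFun k _).linearIndependent

end Representation

theorem stmt5 (k : Type) [Field k] [NeZero n] (D : GaussData n) (τ : Fin n → kˣ) :
    Module.finrank k (KnotAlg k D τ) = 4 * n ^ 2 := by
  rw [Module.finrank_eq_card_basis
    (.mk (linearIndependent_knotBasisFamily k D τ) (span_knotBasisFamily k D τ).ge)]
  simp only [Fintype.card_sum, Fintype.card_prod, Fintype.card_fin, ZMod.card]
  obtain ⟨m, rfl⟩ : ∃ m, n = m + 1 := ⟨n - 1, by have := NeZero.ne n; omega⟩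
  rw [show 2 * (m + 1) - 1 = 2 * m + 1 by omega]
  ring
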